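/- (Lemma 2.2, Fourier-side form.) There exists a constant C > 0 such that for every r ∈ [1,∞], every t ≥ 0, and every measurable F : ℝ³ → ℂ⁶ with N^{−1}_r(F) < ∞, one has N^{−1}_r(ξ ↦ e^{−tA(ξ)}F(ξ)) ≤ C · N^{−1}_r(F). -/

import Mathlib

open MeasureTheory ENNReal Real Filter
open scoped RealInnerProductSpace

noncomputable section

/-- Physical/frequency space ℝ³ with the Euclidean norm. -/
abbrev R3 := EuclideanSpace ℝ (Fin 3)

/-- Vector values ℂ⁶ = ℂ³ × ℂ³ (velocity and micro-rotation components). -/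
abbrev C6 := (Fin 3 ⊕ Fin 3) → ℂ
/-- The 3×3 matrix B(ξ) = i·[[0, ξ₃, −ξ₂], [−ξ₃, 0, ξ₁], [ξ₂, −ξ₁, 0]]. -/
def Bm (ξ : R3) : Matrix (Fin 3) (Fin 3) ℂ :=
  Complex.I • Matrix.of
    ![![0, (ξ 2 : ℂ), -(ξ 1 : ℂ)],
      ![-(ξ 2 : ℂ), 0, (ξ 0 : ℂ)],
      ![(ξ 1 : ℂ), -(ξ 0 : ℂ), 0]]

/-- The 3×3 matrix C(ξ) = ξξᵀ with entries ξ_iξ_j. -/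
def Cm (ξ : R3) : Matrix (Fin 3) (Fin 3) ℂ :=
  Matrix.of fun i j => ((ξ i * ξ j : ℝ) : ℂ)

/-- The 6×6 symbol A(ξ) = [[|ξ|²I₃, B(ξ)], [B(ξ), (|ξ|²+2)I₃ + C(ξ)]] of the
linearized micropolar system (κ = μ = 1, χ = ν = 1/2). -/
def Am (ξ : R3) : Matrix (Fin 3 ⊕ Fin 3) (Fin 3 ⊕ Fin 3) ℂ :=
  Matrix.fromBlocks (((‖ξ‖ ^ 2 : ℝ) : ℂ) • 1) (Bm ξ) (Bm ξ)
    (((‖ξ‖ ^ 2 + 2 : ℝ) : ℂ) • 1 + Cm ξ)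

/-- The semigroup symbol e^{−tA(ξ)}. -/
def expM (t : ℝ) (ξ : R3) : Matrix (Fin 3 ⊕ Fin 3) (Fin 3 ⊕ Fin 3) ℂ :=
  NormedSpace.exp ((-(t : ℂ)) • Am ξ)
/-- ℓ^r norm over ℤ of an ℝ≥0∞-valued sequence, r ∈ [1,∞] (sup when r = ∞). -/
def lnorm (r : ℝ≥0∞) (g : ℤ → ℝ≥0∞) : ℝ≥0∞ :=
  if r = ∞ then ⨆ j, g j else (∑' j, g j ^ r.toReal) ^ (1 / r.toReal)

/-- The time interval (0,T) ⊆ ℝ, for T ∈ (0,∞]. -/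
def timeSet (T : ℝ≥0∞) : Set ℝ := {t : ℝ | 0 < t ∧ ENNReal.ofReal t < T}

/-- L^λ(0,T) norm of an ℝ≥0∞-valued function of time, λ ∈ [1,∞]. -/
def tnorm (lam T : ℝ≥0∞) (h : ℝ → ℝ≥0∞) : ℝ≥0∞ :=
  if lam = ∞ then essSup h (volume.restrict (timeSet T))
  else (∫⁻ t in timeSet T, h t ^ lam.toReal) ^ (1 / lam.toReal)

/-- Littlewood–Paley piece ψ_j(ξ) := ψ(2^{−j}ξ). -/
def psij (ψ : R3 → ℝ) (j : ℤ) (ξ : R3) : ℝ := ψ ((2 : ℝ) ^ (-j) • ξ)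

/-- The standing assumptions on the Littlewood–Paley function ψ: nonnegative, smooth,
supported in the annulus {3/4 ≤ |ξ| ≤ 8/3}, with ∑_{j∈ℤ} ψ(2^{−j}ξ) = 1 for ξ ≠ 0. -/
structure IsLP (ψ : R3 → ℝ) : Prop where
  smooth : ContDiff ℝ (⊤ : ℕ∞) ψ
  nonneg : ∀ ξ, 0 ≤ ψ ξ
  support : ∀ ξ, ψ ξ ≠ 0 → 3 / 4 ≤ ‖ξ‖ ∧ ‖ξ‖ ≤ 8 / 3
  sum_eq_one : ∀ ξ : R3, ξ ≠ 0 → HasSum (fun j : ℤ => psij ψ j ξ) 1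

/-- Fourier-side Besov norm N^s_r(F) = ‖ (2^{js} ‖ψ_j F‖_{L¹})_j ‖_{ℓ^r(ℤ)}. -/
def fbNorm {V : Type*} [NormedAddCommGroup V] [NormedSpace ℝ V]
    (ψ : R3 → ℝ) (s : ℝ) (r : ℝ≥0∞) (F : R3 → V) : ℝ≥0∞ :=
  lnorm r fun j => (2 : ℝ≥0∞) ^ ((j : ℝ) * s) * ∫⁻ ξ, (‖psij ψ j ξ • F ξ‖₊ : ℝ≥0∞)

/-- Fourier-side Chemin–Lerner norm
N^s_{r,λ,T}(F) = ‖ (2^{js} ‖ t ↦ ‖ψ_j F(t,·)‖_{L¹} ‖_{L^λ(0,T)})_j ‖_{ℓ^r(ℤ)}. -/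
def clNorm {V : Type*} [NormedAddCommGroup V] [NormedSpace ℝ V]
    (ψ : R3 → ℝ) (s : ℝ) (r lam T : ℝ≥0∞) (F : ℝ → R3 → V) : ℝ≥0∞ :=
  lnorm r fun j => (2 : ℝ≥0∞) ^ ((j : ℝ) * s) *
    tnorm lam T fun t => ∫⁻ ξ, (‖psij ψ j ξ • F t ξ‖₊ : ℝ≥0∞)


section AuxLemmas
open Matrix
open scoped ComplexOrder

lemma norm_sq_xi (ξ : R3) : (‖ξ‖ ^ 2 : ℝ) = ξ 0 ^ 2 + ξ 1 ^ 2 + ξ 2 ^ 2 := by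
  rw [EuclideanSpace.norm_eq, Real.sq_sqrt (by positivity)]
  simp [Fin.sum_univ_three, sq_abs]

lemma Bm_herm (ξ : R3) : (Bm ξ)ᴴ = Bm ξ := by
  ext i j
  fin_cases i <;> fin_cases j <;>
    simp [Bm, Matrix.conjTranspose_apply, Complex.ext_iff]

lemma Bm_sq (ξ : R3) : Bm ξ * Bm ξ = ((‖ξ‖ ^ 2 : ℝ) : ℂ) • 1 - Cm ξ := by
  ext i j
  rw [norm_sq_xi]
  fin_cases i <;> fin_cases j <;>
    simp [Bm, Cm, Matrix.mul_apply, Fin.sum_univ_three, Complex.ext_iff,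
      ← Complex.ofReal_pow] <;> ring

def xrow (ξ : R3) : Matrix (Fin 1) (Fin 3) ℂ := Matrix.of fun _ j => ((ξ j : ℝ) : ℂ)

lemma xrow_fact (ξ : R3) : (xrow ξ)ᴴ * xrow ξ = Cm ξ := by
  ext i j
  simp [xrow, Cm, Matrix.mul_apply, Matrix.conjTranspose_apply, ← Complex.ofReal_mul]

lemma Am_posSemidef (ξ : R3) : (Am ξ).PosSemidef := by
  have h1 : ((Real.sqrt (‖ξ‖ ^ 2 + 1) : ℂ) • (1 : Matrix (Fin 3) (Fin 3) ℂ))ᴴ *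
      ((Real.sqrt (‖ξ‖ ^ 2 + 1) : ℂ) • 1) = ((‖ξ‖ ^ 2 + 1 : ℝ) : ℂ) • 1 := by
    rw [Matrix.conjTranspose_smul, Matrix.conjTranspose_one, Matrix.smul_mul,
      Matrix.mul_smul, one_mul, smul_smul]
    congr 1
    rw [Complex.star_def, Complex.conj_ofReal, ← Complex.ofReal_mul,
      Real.mul_self_sqrt (by positivity)]
  have key : Am ξ =
      (Matrix.fromBlocks (Bm ξ) 1 0 0)ᴴ * Matrix.fromBlocks (Bm ξ) 1 0 0 +
      ((Matrix.fromBlocks (xrow ξ) 0 0 (xrow ξ))ᴴ * Matrix.fromBlocks (xrow ξ) 0 0 (xrow ξ) +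
       (Matrix.fromBlocks 0 0 0 ((Real.sqrt (‖ξ‖ ^ 2 + 1) : ℂ) • (1 : Matrix (Fin 3) (Fin 3) ℂ)))ᴴ *
        Matrix.fromBlocks 0 0 0 ((Real.sqrt (‖ξ‖ ^ 2 + 1) : ℂ) • 1)) := by
    rw [Matrix.fromBlocks_conjTranspose, Matrix.fromBlocks_conjTranspose,
      Matrix.fromBlocks_conjTranspose, Matrix.fromBlocks_multiply, Matrix.fromBlocks_multiply,
      Matrix.fromBlocks_multiply, Matrix.fromBlocks_add, Matrix.fromBlocks_add, Am, Bm_herm,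
      Bm_sq, xrow_fact, h1]
    simp only [Matrix.conjTranspose_zero, Matrix.conjTranspose_one, Matrix.mul_one,
      Matrix.one_mul, Matrix.mul_zero, Matrix.zero_mul, add_zero, zero_add, Matrix.zero_mul]
    rw [Matrix.fromBlocks_inj]
    refine ⟨by module, rfl, rfl, ?_⟩
    have : ((‖ξ‖ ^ 2 + 2 : ℝ) : ℂ) = ((‖ξ‖ ^ 2 + 1 : ℝ) : ℂ) + 1 := by push_cast; ring
    rw [this]
    module
  rw [key]
  exact (Matrix.posSemidef_conjTranspose_mul_self _).add
    ((Matrix.posSemidef_conjTranspose_mul_self _).add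
      (Matrix.posSemidef_conjTranspose_mul_self _))

lemma row_norm_one {n : Type*} [Fintype n] [DecidableEq n] (U : Matrix.unitaryGroup n ℂ) (i : n) :
    ∑ k, ‖(U : Matrix n n ℂ) i k‖ ^ 2 = 1 := by
  have h : ((U : Matrix n n ℂ) * star (U : Matrix n n ℂ)) i i = 1 := by
    rw [Matrix.mem_unitaryGroup_iff.mp U.2]; simp
  rw [Matrix.mul_apply] at h
  have : ∀ k, (U : Matrix n n ℂ) i k * star (U : Matrix n n ℂ) k i
      = ((‖(U : Matrix n n ℂ) i k‖ ^ 2 : ℝ) : ℂ) := by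
    intro k
    rw [Matrix.star_apply, Complex.star_def, Complex.mul_conj, Complex.normSq_eq_norm_sq]
  simp_rw [this] at h
  exact_mod_cast h

lemma entry_bound_of_posSemidef {n : Type*} [Fintype n] [DecidableEq n] {A : Matrix n n ℂ}
    (hP : A.PosSemidef) (t : ℝ) (ht : 0 ≤ t) (i j : n) :
    ‖NormedSpace.exp ((-(t : ℂ)) • A) i j‖ ≤ 1 := by
  have hA := hP.1
  set V : Matrix n n ℂ := (Matrix.IsHermitian.eigenvectorUnitary hA : Matrix n n ℂ) with hV
  set g : n → ℂ := fun k => (-(t : ℂ)) * (hA.eigenvalues k : ℂ) with hg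
  have hUnit : IsUnit V := (Unitary.toUnits (Matrix.IsHermitian.eigenvectorUnitary hA)).isUnit
  have hinv : V⁻¹ = star V :=
    Matrix.inv_eq_left_inv (Matrix.mem_unitaryGroup_iff'.mp
      (Matrix.IsHermitian.eigenvectorUnitary hA).2)
  have hsm : (-(t : ℂ)) • A = V * Matrix.diagonal g * V⁻¹ := by
    conv_lhs => rw [hA.spectral_theorem, Unitary.conjStarAlgAut_apply]
    rw [hinv]
    have hd : Matrix.diagonal g = (-(t:ℂ)) • Matrix.diagonal (RCLike.ofReal ∘ hA.eigenvalues) := by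
      rw [← Matrix.diagonal_smul]; rfl
    rw [hd, Matrix.mul_smul, Matrix.smul_mul]
  have hexp : NormedSpace.exp ((-(t : ℂ)) • A) =
      V * Matrix.diagonal (fun k => Complex.exp (g k)) * star V := by
    rw [hsm, Matrix.exp_conj V _ hUnit, Matrix.exp_diagonal, hinv, Pi.exp_def]
    simp_rw [← Complex.exp_eq_exp_ℂ]
  rw [hexp, Matrix.mul_apply]
  have habs : ∀ k, ‖(V * Matrix.diagonal (fun k => Complex.exp (g k))) i k * star V k j‖
      ≤ ‖V i k‖ * ‖V j k‖ := by
    intro k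
    rw [Matrix.mul_diagonal, Matrix.star_apply, Complex.star_def, norm_mul, norm_mul,
      Complex.norm_conj]
    have hle : ‖Complex.exp (g k)‖ ≤ 1 := by
      rw [Complex.norm_exp]
      have : (g k).re = -(t * hA.eigenvalues k) := by simp [hg]
      rw [this]
      exact Real.exp_le_one_iff.mpr (by nlinarith [hP.eigenvalues_nonneg k])
    calc ‖V i k‖ * ‖Complex.exp (g k)‖ * ‖V j k‖
        ≤ ‖V i k‖ * 1 * ‖V j k‖ := by gcongr
      _ = ‖V i k‖ * ‖V j k‖ := by ring
  have hCS : ∑ k, ‖V i k‖ * ‖V j k‖ ≤ 1 := by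
    have h2 := Finset.sum_mul_sq_le_sq_mul_sq Finset.univ
      (fun k => ‖V i k‖) (fun k => ‖V j k‖)
    rw [row_norm_one (Matrix.IsHermitian.eigenvectorUnitary hA) i,
      row_norm_one (Matrix.IsHermitian.eigenvectorUnitary hA) j, mul_one] at h2
    have hnn : 0 ≤ ∑ k, ‖V i k‖ * ‖V j k‖ :=
      Finset.sum_nonneg fun k _ => mul_nonneg (norm_nonneg _) (norm_nonneg _)
    nlinarith
  calc ‖∑ k, (V * Matrix.diagonal (fun k => Complex.exp (g k))) i k * star V k j‖
      ≤ ∑ k, ‖(V * Matrix.diagonal (fun k => Complex.exp (g k))) i k * star V k j‖ :=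
        norm_sum_le _ _
    _ ≤ ∑ k, ‖V i k‖ * ‖V j k‖ := Finset.sum_le_sum fun k _ => habs k
    _ ≤ 1 := hCS

lemma mulVec_norm_le {n : Type*} [Fintype n] [Nonempty n] {M : Matrix n n ℂ}
    (hM : ∀ i j, ‖M i j‖ ≤ 1) (v : n → ℂ) :
    ‖M.mulVec v‖ ≤ (Fintype.card n : ℝ) * ‖v‖ := by
  rw [pi_norm_le_iff_of_nonneg (by positivity)]
  intro i
  have hmv : M.mulVec v i = ∑ j, M i j * v j := rfl
  rw [hmv]
  calc ‖∑ j, M i j * v j‖ ≤ ∑ j, ‖M i j * v j‖ := norm_sum_le _ _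
    _ ≤ ∑ _j : n, ‖v‖ := by
        refine Finset.sum_le_sum fun j _ => ?_
        rw [norm_mul]
        calc ‖M i j‖ * ‖v j‖ ≤ 1 * ‖v j‖ :=
              mul_le_mul_of_nonneg_right (hM i j) (norm_nonneg _)
          _ ≤ ‖v‖ := by rw [one_mul]; exact norm_le_pi_norm v j
    _ = (Fintype.card n : ℝ) * ‖v‖ := by rw [Finset.sum_const, Finset.card_univ, nsmul_eq_mul]

lemma expM_mulVec_norm_le (t : ℝ) (ht : 0 ≤ t) (ξ : R3) (v : C6) :
    ‖(expM t ξ).mulVec v‖ ≤ 6 * ‖v‖ := by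
  have hM : ∀ i j, ‖expM t ξ i j‖ ≤ 1 := fun i j =>
    entry_bound_of_posSemidef (Am_posSemidef ξ) t ht i j
  have := mulVec_norm_le hM v
  simpa using this

lemma lnorm_le_mul {r : ℝ≥0∞} (hr : 1 ≤ r) {c : ℝ≥0∞} {g h : ℤ → ℝ≥0∞}
    (H : ∀ j, g j ≤ c * h j) : lnorm r g ≤ c * lnorm r h := by
  unfold lnorm
  split_ifs with hinf
  · rw [ENNReal.mul_iSup]
    exact iSup_mono H
  · set p := r.toReal with hp
    have hp1 : 1 ≤ p := by
      have := ENNReal.toReal_mono hinf hr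
      simpa using this
    have hp0 : 0 < p := lt_of_lt_of_le one_pos hp1
    calc (∑' j, g j ^ p) ^ (1/p) ≤ (∑' j, (c * h j) ^ p) ^ (1/p) := by
          gcongr with j
          exact H j
      _ = (c ^ p * ∑' j, h j ^ p) ^ (1/p) := by
          rw [← ENNReal.tsum_mul_left]
          congr 1
          exact tsum_congr fun j => ENNReal.mul_rpow_of_nonneg _ _ hp0.le
      _ = c * (∑' j, h j ^ p) ^ (1/p) := by
          rw [ENNReal.mul_rpow_of_nonneg _ _ (by positivity), ← ENNReal.rpow_mul,
            mul_one_div_cancel hp0.ne', ENNReal.rpow_one]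

end AuxLemmas

/-- **Lemma 2.2, Fourier-side form.** There is a constant C > 0 such that for every
r ∈ [1,∞], every t ≥ 0, and every measurable F : ℝ³ → ℂ⁶ with N^{−1}_r(F) < ∞, one has
N^{−1}_r(ξ ↦ e^{−tA(ξ)}F(ξ)) ≤ C · N^{−1}_r(F). -/
theorem semigroup_fbNorm_bound (ψ : R3 → ℝ) (hψ : IsLP ψ) :
    ∃ C : ℝ, 0 < C ∧ ∀ r : ℝ≥0∞, 1 ≤ r → ∀ t : ℝ, 0 ≤ t → ∀ F : R3 → C6, Measurable F →
      fbNorm ψ (-1) r F < ∞ →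
      fbNorm ψ (-1) r (fun ξ => (expM t ξ).mulVec (F ξ)) ≤
        ENNReal.ofReal C * fbNorm ψ (-1) r F := by
  refine ⟨6, by norm_num, fun r hr t ht F hF hfin => ?_⟩
  have h6 : (ENNReal.ofReal 6 : ℝ≥0∞) = 6 := by norm_num
  rw [h6]
  unfold fbNorm
  apply lnorm_le_mul hr
  intro j
  have hint : (∫⁻ ξ, (‖psij ψ j ξ • (expM t ξ).mulVec (F ξ)‖₊ : ℝ≥0∞)) ≤
      6 * ∫⁻ ξ, (‖psij ψ j ξ • F ξ‖₊ : ℝ≥0∞) := by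
    rw [← lintegral_const_mul' _ _ (by norm_num : (6:ℝ≥0∞) ≠ ∞)]
    refine lintegral_mono fun ξ => ?_
    have hre : ‖psij ψ j ξ • (expM t ξ).mulVec (F ξ)‖ ≤ 6 * ‖psij ψ j ξ • F ξ‖ := by
      have h1 : (psij ψ j ξ) • (expM t ξ).mulVec (F ξ) =
          (expM t ξ).mulVec ((psij ψ j ξ) • F ξ) := by
        simp [Matrix.mulVec_smul]
      rw [h1]
      exact expM_mulVec_norm_le t ht ξ _
    have hnn : ‖psij ψ j ξ • (expM t ξ).mulVec (F ξ)‖₊ ≤ 6 * ‖psij ψ j ξ • F ξ‖₊ := by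
      rw [← NNReal.coe_le_coe]
      push_cast
      simpa using hre
    calc (‖psij ψ j ξ • (expM t ξ).mulVec (F ξ)‖₊ : ℝ≥0∞)
        ≤ ((6 * ‖psij ψ j ξ • F ξ‖₊ : NNReal) : ℝ≥0∞) := ENNReal.coe_le_coe.mpr hnn
      _ = 6 * (‖psij ψ j ξ • F ξ‖₊ : ℝ≥0∞) := by push_cast; ring
  calc (2:ℝ≥0∞) ^ ((j:ℝ) * (-1)) * ∫⁻ ξ, (‖psij ψ j ξ • (expM t ξ).mulVec (F ξ)‖₊ : ℝ≥0∞)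
      ≤ (2:ℝ≥0∞) ^ ((j:ℝ) * (-1)) * (6 * ∫⁻ ξ, (‖psij ψ j ξ • F ξ‖₊ : ℝ≥0∞)) :=
        mul_le_mul_right hint _
    _ = 6 * ((2:ℝ≥0∞) ^ ((j:ℝ) * (-1)) * ∫⁻ ξ, (‖psij ψ j ξ • F ξ‖₊ : ℝ≥0∞)) := by ring
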